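/- Let G be a bipartite graph with parameters (n, m, d) (left part {0,1}^n, right part {0,1}^m, left-degree D = 2^d) that is a (k, ε)-extractor. Then for every α > 1, G is (α, αε/(α−1))-low-congesting: for every left-subset S with |S| ≤ K = 2^k, the number of α-congested vertices in S is less than (α/(α−1))·ε·K. -/

import Mathlib

open scoped Classical

/-- Number of edges from the left-subset `S` into the right-subset `Y`. -/
noncomputable def edges {L R : Type*} {D : ℕ}
    (nbr : L → Fin D → R) (S : Finset L) (Y : Finset R) : ℕ :=
  ∑ x ∈ S, (Finset.univ.filter fun i => nbr x i ∈ Y).card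

/-- `(k, ε)`-extractor property for a bipartite multigraph with left part
`{0,1}^n`, right part `{0,1}^m` and left-degree `D = 2^d`. -/
noncomputable def IsExtractor {n m d : ℕ} (nbr : Fin (2^n) → Fin (2^d) → Fin (2^m))
    (k : ℕ) (ε : ℝ) : Prop :=
  ∀ S : Finset (Fin (2^n)), 2^k ≤ S.card →
    ∀ Y : Finset (Fin (2^m)),
      |(edges nbr S Y : ℝ) / ((2^d : ℕ) * S.card) - (Y.card : ℝ) / (2^m : ℕ)| < ε

/-- The `α`-clot of `S` with parameter `K = 2^k`: right vertices receiving more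
than `α·D·K/M` edges from `S`. -/
noncomputable def clot {n m d : ℕ} (nbr : Fin (2^n) → Fin (2^d) → Fin (2^m))
    (S : Finset (Fin (2^n))) (k : ℕ) (α : ℝ) : Finset (Fin (2^m)) :=
  Finset.univ.filter fun y =>
    α * (2^d : ℕ) * (2^k : ℕ) / (2^m : ℕ) < (edges nbr S {y} : ℝ)

/-!
Enlarge `S` to a set `S'` of size exactly `K`; this only enlarges the clot and the set of congested
vertices. Let `C` be the clot of `S'`, `T` its congested vertices, `E` the number of edges from `S'`
into `C`, and `μ = |C|/M`. All `D·|T|` edges of `T` land in `C`, and each vertex of `C` receives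
more than `αDK/M` edges, so `|T|/K ≤ E/(DK)` and `αμ ≤ E/(DK)`. The extractor property applied to
`S'` and the test set `C` gives `E/(DK) < μ + ε`. Hence `(α - 1)μ < ε`, and
`|T|/K < μ + ε < ε/(α - 1) + ε = αε/(α - 1)`.
-/

lemma edges_mono {L R : Type*} {D : ℕ} (nbr : L → Fin D → R) {S S' : Finset L}
    (h : S ⊆ S') (Y : Finset R) : edges nbr S Y ≤ edges nbr S' Y :=
  Finset.sum_le_sum_of_subset h

lemma edges_eq_sum_edges_singleton {L R : Type*} {D : ℕ} (nbr : L → Fin D → R)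
    (S : Finset L) (Y : Finset R) :
    edges nbr S Y = ∑ y ∈ Y, edges nbr S {y} := by
  unfold edges
  rw [Finset.sum_comm]
  refine Finset.sum_congr rfl fun x _ => ?_
  simp only [Finset.card_filter, Finset.mem_singleton]
  rw [Finset.sum_comm]
  refine Finset.sum_congr rfl fun i _ => ?_
  simp [Finset.sum_ite_eq]

lemma edges_eq_card_mul_of_forall_mem {L R : Type*} {D : ℕ} (nbr : L → Fin D → R)
    {S : Finset L} {Y : Finset R} (h : ∀ x ∈ S, ∀ i, nbr x i ∈ Y) :
    edges nbr S Y = S.card * D := by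
  unfold edges
  rw [Finset.sum_congr rfl fun x hx => by rw [Finset.filter_true_of_mem fun i _ => h x hx i],
    Finset.sum_const, Finset.card_univ, Fintype.card_fin, smul_eq_mul]

lemma card_mul_le_edges_of_lt {L R : Type*} {D : ℕ} (nbr : L → Fin D → R)
    {S : Finset L} {Y : Finset R} {t : ℝ} (h : ∀ y ∈ Y, t < edges nbr S {y}) :
    Y.card * t ≤ edges nbr S Y := by
  rw [edges_eq_sum_edges_singleton, Nat.cast_sum, ← nsmul_eq_mul]
  exact Finset.card_nsmul_le_sum _ _ _ fun y hy => (h y hy).le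

noncomputable def congested {n m d : ℕ} (nbr : Fin (2^n) → Fin (2^d) → Fin (2^m))
    (S : Finset (Fin (2^n))) (k : ℕ) (α : ℝ) : Finset (Fin (2^n)) :=
  S.filter fun x => ∀ i : Fin (2^d), nbr x i ∈ clot nbr S k α

section Congestion

variable {n m d : ℕ} (nbr : Fin (2^n) → Fin (2^d) → Fin (2^m)) {k : ℕ} {α : ℝ}

lemma clot_mono {S S' : Finset (Fin (2^n))} (h : S ⊆ S') :
    clot nbr S k α ⊆ clot nbr S' k α := by
  intro y hy
  simp only [clot, Finset.mem_filter, Finset.mem_univ, true_and] at hy ⊢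
  exact hy.trans_le (by exact_mod_cast edges_mono nbr h {y})

lemma congested_mono {S S' : Finset (Fin (2^n))} (h : S ⊆ S') :
    congested nbr S k α ⊆ congested nbr S' k α := by
  intro x hx
  simp only [congested, Finset.mem_filter] at hx ⊢
  exact ⟨h hx.1, fun i => clot_mono nbr h (hx.2 i)⟩

lemma card_congested_mul_le_edges_clot (S : Finset (Fin (2^n))) :
    (congested nbr S k α).card * 2^d ≤ edges nbr S (clot nbr S k α) := by
  calc (congested nbr S k α).card * 2^d
      = edges nbr (congested nbr S k α) (clot nbr S k α) :=
        (edges_eq_card_mul_of_forall_mem nbr fun _ hx => (Finset.mem_filter.mp hx).2).symm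
    _ ≤ edges nbr S (clot nbr S k α) := edges_mono nbr (Finset.filter_subset _ _) _

lemma card_clot_mul_le_edges_clot (S : Finset (Fin (2^n))) :
    (clot nbr S k α).card * (α * (2^d : ℕ) * (2^k : ℕ) / (2^m : ℕ)) ≤
      edges nbr S (clot nbr S k α) :=
  card_mul_le_edges_of_lt nbr fun _ hy => (Finset.mem_filter.mp hy).2

end Congestion

lemma lt_div_sub_one_mul_of_le_of_lt {α ε τ μ e : ℝ} (hα : 1 < α)
    (hτ : τ ≤ e) (hμ : α * μ ≤ e) (he : e < μ + ε) : τ < α / (α - 1) * ε := by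
  have hα₁ : 0 < α - 1 := sub_pos.mpr hα
  have hμε : μ < ε / (α - 1) := by rw [lt_div_iff₀ hα₁]; linarith
  calc τ < ε / (α - 1) + ε := by linarith
    _ = α / (α - 1) * ε := by field_simp; ring

lemma card_congested_lt_of_card_eq {n m d k : ℕ} {ε α : ℝ}
    {nbr : Fin (2^n) → Fin (2^d) → Fin (2^m)} (hext : IsExtractor nbr k ε) (hα : 1 < α)
    {S : Finset (Fin (2^n))} (hS : S.card = 2^k) :
    ((congested nbr S k α).card : ℝ) < α / (α - 1) * ε * (2^k : ℕ) := by
  have hTE : ((congested nbr S k α).card : ℝ) * (2^d : ℕ) ≤ edges nbr S (clot nbr S k α) := by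
    exact_mod_cast card_congested_mul_le_edges_clot nbr S
  have hCE := card_clot_mul_le_edges_clot nbr (k := k) (α := α) S
  have hext' := hext S hS.ge (clot nbr S k α)
  rw [hS] at hext'
  set C := clot nbr S k α
  set E : ℝ := (edges nbr S C : ℝ)
  have hK : (0 : ℝ) < (2^k : ℕ) := by positivity
  have hDK : (0 : ℝ) < (2^d : ℕ) * (2^k : ℕ) := by positivity
  have hT : ((congested nbr S k α).card : ℝ) / (2^k : ℕ) ≤ E / ((2^d : ℕ) * (2^k : ℕ)) := by
    rw [div_le_div_iff₀ hK hDK, ← mul_assoc]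
    exact mul_le_mul_of_nonneg_right hTE hK.le
  have hC : α * ((C.card : ℝ) / (2^m : ℕ)) ≤ E / ((2^d : ℕ) * (2^k : ℕ)) := by
    rw [le_div_iff₀ hDK]
    calc _ = C.card * (α * (2^d : ℕ) * (2^k : ℕ) / (2^m : ℕ)) := by ring
      _ ≤ E := hCE
  have hE : E / ((2^d : ℕ) * (2^k : ℕ)) < (C.card : ℝ) / (2^m : ℕ) + ε := by
    linarith [le_abs_self (E / ((2^d : ℕ) * (2^k : ℕ)) - (C.card : ℝ) / (2^m : ℕ))]
  exact (div_lt_iff₀ hK).mp (lt_div_sub_one_mul_of_le_of_lt hα hT hC hE)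

theorem stmt_3_general {n m d : ℕ} (k : ℕ) (hk : k ≤ n) (ε : ℝ)
    (nbr : Fin (2^n) → Fin (2^d) → Fin (2^m))
    (hext : IsExtractor nbr k ε) (α : ℝ) (hα : 1 < α) :
    ∀ S : Finset (Fin (2^n)), S.card ≤ 2^k →
      ((S.filter fun x => ∀ i : Fin (2^d), nbr x i ∈ clot nbr S k α).card : ℝ)
        < (α / (α - 1)) * ε * (2^k : ℕ) := by
  intro S hS
  obtain ⟨S', hSS', hS'⟩ := Finset.exists_superset_card_eq hS
    (by simpa using Nat.pow_le_pow_right two_pos hk)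
  calc ((congested nbr S k α).card : ℝ) ≤ (congested nbr S' k α).card := by
        exact_mod_cast Finset.card_le_card (congested_mono nbr hSS')
    _ < _ := card_congested_lt_of_card_eq hext hα hS'

/-- a `(k, ε)`-extractor is `(α, αε/(α−1))`-low-congesting: every
left-subset `S` with `|S| ≤ K = 2^k` contains fewer than `(α/(α−1))·ε·K`
`α`-congested vertices. -/
theorem stmt_3 {n m d : ℕ} (k : ℕ) (hk : k ≤ n) (ε : ℝ) (hε : 0 < ε)
    (nbr : Fin (2^n) → Fin (2^d) → Fin (2^m))
    (hext : IsExtractor nbr k ε) (α : ℝ) (hα : 1 < α) :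
    ∀ S : Finset (Fin (2^n)), S.card ≤ 2^k →
      ((S.filter fun x => ∀ i : Fin (2^d), nbr x i ∈ clot nbr S k α).card : ℝ)
        < (α / (α - 1)) * ε * (2^k : ℕ) :=
  stmt_3_general k hk ε nbr hext α hα
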